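/- arXiv:2310.04340 — 8 statements merged into one kernel-verified Lean document; each statement's English description precedes it below -/
import Mathlib

section
/- For every symmetric matrix Q ∈ S^n, ℓ_2(Q) = min{ min{ (Q_{ii}Q_{jj} − Q_{ij}²)/(Q_{ii} + Q_{jj} − 2Q_{ij}) : 1 ≤ i < j ≤ n, Q_{ij} < min{Q_{ii}, Q_{jj}} }, min_{1≤k≤n} Q_{kk} }, where the inner minimum is taken to be +∞ (i.e., is ignored) if no pair (i,j) satisfies Q_{ij} < min{Q_{ii}, Q_{jj}}. -/
/-
Every point of `F₂` lies on an edge `[e_j, e_i]` of the simplex, where the quadratic form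
restricts to `q t = t² a + 2 t (1 - t) c + (1 - t)² b` with `a = Q i i`, `b = Q j j`,
`c = Q i j`. If `c < min a b`, then `d = a + b - 2 c > 0`, `q` is strictly convex, and its
global minimum `(a b - c²) / d` is attained at `t = (b - c) / d ∈ [0, 1]`. Otherwise
`q ≥ min a b` on `[0, 1]`, and `min a b` is the value of `q` at a vertex.
-/

open Matrix BigOperators

noncomputable section

def simplexF (n : ℕ) : Set (Fin n → ℝ) :=
  {x | (∑ i, x i) = 1 ∧ ∀ i, 0 ≤ x i}

def sparsity {n : ℕ} (x : Fin n → ℝ) : ℕ :=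
  Set.ncard {i | x i ≠ 0}

def sparseF (n ρ : ℕ) : Set (Fin n → ℝ) :=
  {x | x ∈ simplexF n ∧ sparsity x ≤ ρ}

def quadForm {n : ℕ} (Q : Matrix (Fin n) (Fin n) ℝ) (x : Fin n → ℝ) : ℝ :=
  x ⬝ᵥ Q.mulVec x

def ell {n : ℕ} (Q : Matrix (Fin n) (Fin n) ℝ) : ℝ :=
  sInf (quadForm Q '' simplexF n)

def ellSparse {n : ℕ} (Q : Matrix (Fin n) (Fin n) ℝ) (ρ : ℕ) : ℝ :=
  sInf (quadForm Q '' sparseF n ρ)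

def ip {n : ℕ} (Q X : Matrix (Fin n) (Fin n) ℝ) : ℝ :=
  ∑ i, ∑ j, Q i j * X i j

section
variable {n : ℕ} {Q : Matrix (Fin n) (Fin n) ℝ}

-- `edgePoint i i t = Pi.single i 1`, so the vertices of the simplex are edge points too.
def edgePoint (i j : Fin n) (t : ℝ) : Fin n → ℝ :=
  Pi.single i t + Pi.single j (1 - t)

lemma quadForm_single_add_single (hQ : Q.IsSymm) (i j : Fin n) (a b : ℝ) :
    quadForm Q (Pi.single i a + Pi.single j b) =
      a ^ 2 * Q i i + 2 * a * b * Q i j + b ^ 2 * Q j j := by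
  have hji : Q j i = Q i j := hQ.apply i j
  simp only [quadForm, mulVec_add, add_dotProduct, dotProduct_add, single_dotProduct,
    mulVec, dotProduct_single, hji]
  ring

lemma quadForm_edgePoint (hQ : Q.IsSymm) (i j : Fin n) (t : ℝ) :
    quadForm Q (edgePoint i j t) =
      t ^ 2 * Q i i + 2 * t * (1 - t) * Q i j + (1 - t) ^ 2 * Q j j :=
  quadForm_single_add_single hQ i j t (1 - t)

lemma sparsity_single_add_single_le (i j : Fin n) (a b : ℝ) :
    sparsity (Pi.single i a + Pi.single j b) ≤ 2 := by
  have hsub : {k | (Pi.single i a + Pi.single j b : Fin n → ℝ) k ≠ 0} ⊆ {i, j} := by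
    intro k hk
    by_contra h
    simp only [Set.mem_insert_iff, Set.mem_singleton_iff, not_or] at h
    simp [Pi.single_apply, h.1, h.2] at hk
  exact (Set.ncard_le_ncard hsub).trans ((Set.ncard_insert_le _ _).trans (by simp))

lemma edgePoint_mem_sparseF (i j : Fin n) {t : ℝ} (ht₀ : 0 ≤ t) (ht₁ : t ≤ 1) :
    edgePoint i j t ∈ sparseF n 2 := by
  refine ⟨⟨?_, fun k => ?_⟩, sparsity_single_add_single_le i j t (1 - t)⟩
  · simp [edgePoint, Finset.sum_add_distrib]
  · simp only [edgePoint, Pi.add_apply, Pi.single_apply]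
    split_ifs <;> linarith

lemma eq_single_of_support_subset {x : Fin n → ℝ} {i : Fin n} (hx : {k | x k ≠ 0} ⊆ {i}) :
    x = Pi.single i (x i) := by
  ext k
  by_cases hki : k = i
  · subst hki; simp
  · have : x k = 0 := by by_contra hk; exact hki (hx hk)
    simp [hki, this]

lemma eq_single_add_single_of_support_subset {x : Fin n → ℝ} {i j : Fin n} (hij : i ≠ j)
    (hx : {k | x k ≠ 0} ⊆ {i, j}) : x = Pi.single i (x i) + Pi.single j (x j) := by
  ext k
  by_cases hki : k = i
  · subst hki; simp [hij]
  by_cases hkj : k = j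
  · subst hkj; simp [hki]
  have : x k = 0 := by by_contra hk; simpa [hki, hkj] using hx hk
  simp [hki, hkj, this]

lemma exists_edgePoint_eq {x : Fin n → ℝ} (hx : x ∈ sparseF n 2) :
    ∃ i j t, 0 ≤ t ∧ t ≤ 1 ∧ edgePoint i j t = x := by
  obtain ⟨⟨hsum, hnonneg⟩, hsparse⟩ := hx
  have hcard : sparsity x = 0 ∨ sparsity x = 1 ∨ sparsity x = 2 := by omega
  rcases hcard with h0 | h1 | h2
  · rw [sparsity, Set.ncard_eq_zero] at h0
    have : x = 0 := by ext k; by_contra hk; exact (h0 ▸ hk : k ∈ (∅ : Set (Fin n)))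
    simp [this] at hsum
  · obtain ⟨i, hi⟩ := Set.ncard_eq_one.mp h1
    have hx := eq_single_of_support_subset hi.subset
    have hxi : x i = 1 := by rw [hx] at hsum; simpa using hsum
    refine ⟨i, i, 1, zero_le_one, le_rfl, ?_⟩
    rw [hx, hxi, edgePoint, sub_self, Pi.single_zero, add_zero]
  · obtain ⟨i, j, hij, hS⟩ := Set.ncard_eq_two.mp h2
    have hx := eq_single_add_single_of_support_subset hij hS.subset
    have hxj : x j = 1 - x i := by
      rw [hx] at hsum; simp [Finset.sum_add_distrib] at hsum; linarith
    refine ⟨i, j, x i, hnonneg i, by linarith [hnonneg j], ?_⟩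
    rw [edgePoint, ← hxj, ← hx]

def pairRatio (Q : Matrix (Fin n) (Fin n) ℝ) (i j : Fin n) : ℝ :=
  (Q i i * Q j j - Q i j ^ 2) / (Q i i + Q j j - 2 * Q i j)

lemma pairRatio_comm (hQ : Q.IsSymm) (i j : Fin n) : pairRatio Q j i = pairRatio Q i j := by
  rw [pairRatio, pairRatio, hQ.apply j i]
  ring

lemma pairRatio_le_quadForm_edgePoint (hQ : Q.IsSymm) {i j : Fin n}
    (hd : 0 < Q i i + Q j j - 2 * Q i j) (t : ℝ) :
    pairRatio Q i j ≤ quadForm Q (edgePoint i j t) := by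
  rw [quadForm_edgePoint hQ, pairRatio, div_le_iff₀ hd]
  -- completing the square: `d * q t - (a * b - c ^ 2) = (d * t - (b - c)) ^ 2`
  nlinarith [sq_nonneg ((Q i i + Q j j - 2 * Q i j) * t - (Q j j - Q i j))]

lemma quadForm_edgePoint_pairMinimizer (hQ : Q.IsSymm) {i j : Fin n}
    (hd : Q i i + Q j j - 2 * Q i j ≠ 0) :
    quadForm Q (edgePoint i j ((Q j j - Q i j) / (Q i i + Q j j - 2 * Q i j))) =
      pairRatio Q i j := by
  rw [quadForm_edgePoint hQ, pairRatio, eq_div_iff hd]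
  generalize ht : (Q j j - Q i j) / (Q i i + Q j j - 2 * Q i j) = t
  have hdt : (Q i i + Q j j - 2 * Q i j) * t = Q j j - Q i j := by rw [← ht]; field_simp
  linear_combination ((Q i i + Q j j - 2 * Q i j) * t - (Q j j - Q i j)) * hdt

lemma min_le_quadForm_edgePoint (hQ : Q.IsSymm) {i j : Fin n}
    (hc : min (Q i i) (Q j j) ≤ Q i j) {t : ℝ} (ht₀ : 0 ≤ t) (ht₁ : t ≤ 1) :
    min (Q i i) (Q j j) ≤ quadForm Q (edgePoint i j t) := by
  rw [quadForm_edgePoint hQ]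
  have ha := min_le_left (Q i i) (Q j j)
  have hb := min_le_right (Q i i) (Q j j)
  -- `q t - m = t ^ 2 * (a - m) + 2 * t * (1 - t) * (c - m) + (1 - t) ^ 2 * (b - m)`,
  -- since the three weights sum to `1`
  nlinarith [mul_nonneg (sq_nonneg t) (sub_nonneg.mpr ha),
    mul_nonneg (sq_nonneg (1 - t)) (sub_nonneg.mpr hb),
    mul_nonneg (mul_nonneg ht₀ (sub_nonneg.mpr ht₁)) (sub_nonneg.mpr hc)]

lemma le_quadForm_of_mem_sparseF_two (hQ : Q.IsSymm) {R : ℝ} (hdiag : ∀ k, R ≤ Q k k)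
    (hpair : ∀ i j, i < j → Q i j < min (Q i i) (Q j j) → R ≤ pairRatio Q i j)
    {x : Fin n → ℝ} (hx : x ∈ sparseF n 2) : R ≤ quadForm Q x := by
  obtain ⟨i, j, t, ht₀, ht₁, rfl⟩ := exists_edgePoint_eq hx
  by_cases hc : Q i j < min (Q i i) (Q j j)
  · have hd : 0 < Q i i + Q j j - 2 * Q i j := by rw [lt_min_iff] at hc; linarith
    refine le_trans ?_ (pairRatio_le_quadForm_edgePoint hQ hd t)
    have hij : i ≠ j := by rintro rfl; simp at hc
    rcases hij.lt_or_gt with h | h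
    · exact hpair i j h hc
    · rw [← pairRatio_comm hQ]
      exact hpair j i h (by rwa [hQ.apply, min_comm])
  · exact (le_min (hdiag i) (hdiag j)).trans
      (min_le_quadForm_edgePoint hQ (not_lt.mp hc) ht₀ ht₁)

lemma diag_mem_quadForm_image_sparseF_two (hQ : Q.IsSymm) (k : Fin n) :
    Q k k ∈ quadForm Q '' sparseF n 2 :=
  ⟨edgePoint k k 1, edgePoint_mem_sparseF k k zero_le_one le_rfl, by
    rw [quadForm_edgePoint hQ]; ring⟩

lemma pairRatio_mem_quadForm_image_sparseF_two (hQ : Q.IsSymm) {i j : Fin n}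
    (hc : Q i j < min (Q i i) (Q j j)) : pairRatio Q i j ∈ quadForm Q '' sparseF n 2 := by
  rw [lt_min_iff] at hc
  have hd : 0 < Q i i + Q j j - 2 * Q i j := by linarith
  refine ⟨_, edgePoint_mem_sparseF i j ?_ ?_, quadForm_edgePoint_pairMinimizer hQ hd.ne'⟩
  · exact div_nonneg (by linarith) hd.le
  · rw [div_le_one hd]; linarith

lemma ellSparse_two_eq (hQ : Q.IsSymm) {R : ℝ} (hdiag : ∀ k, R ≤ Q k k)
    (hpair : ∀ i j, i < j → Q i j < min (Q i i) (Q j j) → R ≤ pairRatio Q i j)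
    (hR : R ∈ quadForm Q '' sparseF n 2) : ellSparse Q 2 = R :=
  IsLeast.csInf_eq ⟨hR, by
    rintro _ ⟨x, hx, rfl⟩
    exact le_quadForm_of_mem_sparseF_two hQ hdiag hpair hx⟩

end

theorem stmt1 {n : ℕ} (hn : 0 < n) (Q : Matrix (Fin n) (Fin n) ℝ) (hQ : Q.IsSymm) :
    ellSparse Q 2 =
      (if hT : (Finset.univ.filter fun p : Fin n × Fin n =>
            p.1 < p.2 ∧ Q p.1 p.2 < min (Q p.1 p.1) (Q p.2 p.2)).Nonempty then
        min
          ((Finset.univ.filter fun p : Fin n × Fin n =>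
              p.1 < p.2 ∧ Q p.1 p.2 < min (Q p.1 p.1) (Q p.2 p.2)).inf' hT fun p =>
            (Q p.1 p.1 * Q p.2 p.2 - Q p.1 p.2 ^ 2) /
              (Q p.1 p.1 + Q p.2 p.2 - 2 * Q p.1 p.2))
          (Finset.univ.inf' (Finset.univ_nonempty_iff.mpr ⟨⟨0, hn⟩⟩) fun k => Q k k)
      else (Finset.univ.inf' (Finset.univ_nonempty_iff.mpr ⟨⟨0, hn⟩⟩) fun k => Q k k)) := by
  apply ellSparse_two_eq hQ
  · intro k
    split_ifs
    · exact (min_le_right _ _).trans (Finset.inf'_le _ (Finset.mem_univ k))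
    · exact Finset.inf'_le _ (Finset.mem_univ k)
  · intro i j hij hc
    have hmem : (i, j) ∈ Finset.univ.filter fun p : Fin n × Fin n =>
        p.1 < p.2 ∧ Q p.1 p.2 < min (Q p.1 p.1) (Q p.2 p.2) :=
      Finset.mem_filter.mpr ⟨Finset.mem_univ _, hij, hc⟩
    rw [dif_pos ⟨_, hmem⟩]
    exact (min_le_left _ _).trans (Finset.inf'_le _ hmem)
  · obtain ⟨k, -, hk⟩ := Finset.exists_mem_eq_inf' (Finset.univ_nonempty_iff.mpr ⟨⟨0, hn⟩⟩)
      fun k => Q k k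
    split_ifs with hT
    · obtain ⟨p, hpT, hpeq⟩ := Finset.exists_mem_eq_inf' hT fun p => pairRatio Q p.1 p.2
      refine min_rec (fun _ => ?_) (fun _ => ?_)
      · convert pairRatio_mem_quadForm_image_sparseF_two hQ (Finset.mem_filter.mp hpT).2.2 using 1
        exact hpeq
      · rw [hk]; exact diag_mem_quadForm_image_sparseF_two hQ k
    · rw [hk]; exact diag_mem_quadForm_image_sparseF_two hQ k

end
end

section
/- F^{R1}_1 = {(x,X) ∈ ℝ^n × S^n : eᵀx = 1, X = Diag(x), x ≥ 0}, where Diag(x) denotes the diagonal matrix with diagonal x. -/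
open Matrix BigOperators

noncomputable section

def R1Feasible {n : ℕ} (ρ : ℕ) (x u : Fin n → ℝ)
    (X U R : Matrix (Fin n) (Fin n) ℝ) : Prop :=
  X.IsSymm ∧ U.IsSymm ∧
  (∑ i, x i) = 1 ∧
  (∑ i, u i) = (ρ : ℝ) ∧
  (∀ i, x i ≤ u i) ∧
  (∀ i, 0 ≤ x i) ∧
  (∀ i, U i i = u i) ∧
  (∀ i, (∑ j, X i j) = x i) ∧
  (∀ j, (∑ i, R i j) = u j) ∧
  (∀ i, (∑ j, R i j) = (ρ : ℝ) * x i) ∧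
  (∀ i, (∑ j, U i j) = (ρ : ℝ) * u i) ∧
  (∀ i j, 0 ≤ X i j - R j i - R i j + U i j) ∧
  (∀ i j, X i j - R j i ≤ 0) ∧
  (∀ i j, R i j - U i j ≤ 0) ∧
  (∀ i j, 0 ≤ X i j) ∧ (∀ i j, 0 ≤ R i j) ∧ (∀ i j, 0 ≤ U i j)

def FR1proj (n ρ : ℕ) : Set ((Fin n → ℝ) × Matrix (Fin n) (Fin n) ℝ) :=
  {p | ∃ u U R, R1Feasible ρ p.1 u p.2 U R}

def FR1 (n : ℕ) : Set ((Fin n → ℝ) × Matrix (Fin n) (Fin n) ℝ) :=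
  {p | p.2.IsSymm ∧ (∑ i, p.1 i) = 1 ∧ (∀ i, (∑ j, p.2 i j) = p.1 i) ∧
    (∀ i, 0 ≤ p.1 i) ∧ (∀ i j, 0 ≤ p.2 i j)}

namespace Matrix

variable {ι α : Type*}

theorem IsDiag.sum_row [Fintype ι] [AddCommMonoid α] {A : Matrix ι ι α} (hA : A.IsDiag) (i : ι) :
    ∑ j, A i j = A i i :=
  Fintype.sum_eq_single i fun _ hj => hA (Ne.symm hj)

theorem isDiag_of_nonneg_of_sum_row_eq_diag [Fintype ι] [DecidableEq ι] [AddCommMonoid α]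
    [PartialOrder α] [IsOrderedCancelAddMonoid α] {A : Matrix ι ι α} (h0 : ∀ i j, 0 ≤ A i j)
    (hsum : ∀ i, ∑ j, A i j = A i i) : A.IsDiag := by
  intro i j hij
  have hoff : ∑ k ∈ Finset.univ.erase i, A i k = 0 := by
    have := hsum i
    rwa [← Finset.sum_erase_add _ _ (Finset.mem_univ i), add_eq_right] at this
  exact (Finset.sum_eq_zero_iff_of_nonneg fun k _ => h0 i k).mp hoff j
    (Finset.mem_erase.mpr ⟨Ne.symm hij, Finset.mem_univ j⟩)

theorem IsDiag.of_nonneg_of_le [Zero α] [PartialOrder α] {A B : Matrix ι ι α} (hB : B.IsDiag)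
    (h0 : ∀ i j, 0 ≤ A i j) (hle : ∀ i j, A i j ≤ B i j) : A.IsDiag := fun i j hij =>
  le_antisymm (hB hij ▸ hle i j) (h0 i j)

end Matrix

section

variable {n : ℕ} {x u : Fin n → ℝ} {X U R : Matrix (Fin n) (Fin n) ℝ}

/-- With `ρ = 1` the row sums of `U ≥ 0` equal its diagonal, forcing `U` to be diagonal; then
`0 ≤ R ≤ U` and `0 ≤ X ≤ Rᵀ` make `R` and `X` diagonal too. -/
theorem R1Feasible.eq_diagonal (h : R1Feasible 1 x u X U R) : X = diagonal x := by
  obtain ⟨-, -, -, -, -, -, hUd, hXr, -, -, hUr, -, hXR, hRU, hX0, hR0, hU0⟩ := h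
  have hU : U.IsDiag := isDiag_of_nonneg_of_sum_row_eq_diag hU0 fun i => by
    rw [hUr, hUd, Nat.cast_one, one_mul]
  have hR : R.IsDiag := hU.of_nonneg_of_le hR0 fun i j => sub_nonpos.mp (hRU i j)
  have hX : X.IsDiag := hR.transpose.of_nonneg_of_le hX0 fun i j => sub_nonpos.mp (hXR i j)
  have hdiag : X.diag = x := funext fun i => (hX.sum_row i).symm.trans (hXr i)
  rw [← hX.diagonal_diag, hdiag]

theorem r1Feasible_diagonal (hx1 : ∑ i, x i = 1) (hx0 : ∀ i, 0 ≤ x i) :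
    R1Feasible 1 x x (diagonal x) (diagonal x) (diagonal x) := by
  have hsum : ∀ i, ∑ j, diagonal x i j = x i := fun i =>
    ((isDiag_diagonal x).sum_row i).trans (diagonal_apply_eq x i)
  have hsum' : ∀ j, ∑ i, diagonal x i j = x j := fun j =>
    ((isDiag_diagonal x).transpose.sum_row j).trans (diagonal_apply_eq x j)
  have hsymm : ∀ i j, diagonal x j i = diagonal x i j := (isSymm_diagonal x).apply
  have hD0 : ∀ i j, 0 ≤ diagonal x i j := fun i j => by
    rw [diagonal_apply]
    split_ifs
    exacts [hx0 i, le_rfl]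
  refine ⟨isSymm_diagonal x, isSymm_diagonal x, hx1, by rw [hx1, Nat.cast_one], fun _ => le_rfl,
    hx0, diagonal_apply_eq x, hsum, hsum', ?_, ?_, ?_, ?_, ?_, hD0, hD0, hD0⟩
  · exact fun i => by rw [hsum, Nat.cast_one, one_mul]
  · exact fun i => by rw [hsum, Nat.cast_one, one_mul]
  · exact fun i j => by rw [hsymm]; linarith
  · exact fun i j => by rw [hsymm, sub_self]
  · exact fun i j => (sub_self _).le

end

theorem stmt3_general {n : ℕ} :
    FR1proj n 1 =
      {p : (Fin n → ℝ) × Matrix (Fin n) (Fin n) ℝ |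
        (∑ i, p.1 i) = 1 ∧ p.2 = Matrix.diagonal p.1 ∧ ∀ i, 0 ≤ p.1 i} := by
  ext ⟨x, X⟩
  simp only [FR1proj, Set.mem_ofPred_eq]
  constructor
  · rintro ⟨u, U, R, h⟩
    exact ⟨h.2.2.1, h.eq_diagonal, h.2.2.2.2.2.1⟩
  · rintro ⟨hx1, rfl, hx0⟩
    exact ⟨x, _, _, r1Feasible_diagonal hx1 hx0⟩

theorem stmt3 {n : ℕ} (hn : 0 < n) :
    FR1proj n 1 =
      {p : (Fin n → ℝ) × Matrix (Fin n) (Fin n) ℝ |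
        (∑ i, p.1 i) = 1 ∧ p.2 = Matrix.diagonal p.1 ∧ ∀ i, 0 ≤ p.1 i} :=
  stmt3_general

end
end

section
/- For each ρ ∈ {2,3,…,n}, F^{R1}_ρ = F^{R1}, i.e., the projection of the R1(ρ)-feasible set onto (x,X) equals the RLT feasible set of the unconstrained standard quadratic program. -/
/-!
The inclusion `F^{R1}_ρ ⊆ F^{R1}` only forgets constraints. Conversely, the R1(ρ)-feasible set is
convex: its constraints are linear, and the only inhomogeneous ones, `eᵀx = 1` and `eᵀu = ρ`,
survive convex combinations. A point `(x, X)` of `F^{R1}` is the convex combination with weights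
`X i j` of the points `((e_i + e_j)/2, (e_i e_jᵀ + e_j e_iᵀ)/2)`, and each of these lifts to an
R1(ρ)-feasible tuple by taking `u` the indicator of a `ρ`-element set `T ⊇ {i, j}`, `U = u uᵀ` and
`R = x uᵀ`.
-/

open Matrix BigOperators

noncomputable section

section R1Relaxation

def r1FeasibleSet (n ρ : ℕ) : Set ((Fin n → ℝ) × (Fin n → ℝ) × Matrix (Fin n) (Fin n) ℝ ×
    Matrix (Fin n) (Fin n) ℝ × Matrix (Fin n) (Fin n) ℝ) :=
  {t | R1Feasible ρ t.1 t.2.1 t.2.2.1 t.2.2.2.1 t.2.2.2.2}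

theorem convex_r1FeasibleSet (n ρ : ℕ) : Convex ℝ (r1FeasibleSet n ρ) := by
  rintro ⟨x, u, X, U, R⟩ h ⟨x', u', X', U', R'⟩ h' a b ha hb hab
  obtain ⟨hX, hU, hx, hu, hxu, hx0, hUu, hXx, hRu, hRx, hUρ, hmix, hXR, hRU, hX0, hR0, hU0⟩ :
    R1Feasible ρ x u X U R := h
  obtain ⟨hX', hU', hx', hu', hxu', hx0', hUu', hXx', hRu', hRx', hUρ', hmix', hXR', hRU', hX0',
    hR0', hU0'⟩ : R1Feasible ρ x' u' X' U' R' := h'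
  have comb_le {p q p' q' : ℝ} (h : p ≤ q) (h' : p' ≤ q') : a * p + b * p' ≤ a * q + b * q' :=
    add_le_add (mul_le_mul_of_nonneg_left h ha) (mul_le_mul_of_nonneg_left h' hb)
  have comb_nonneg {p p' : ℝ} (h : 0 ≤ p) (h' : 0 ≤ p') : 0 ≤ a * p + b * p' := by
    simpa using comb_le h h'
  have comb_nonpos {p p' : ℝ} (h : p ≤ 0) (h' : p' ≤ 0) : a * p + b * p' ≤ 0 := by
    simpa using comb_le h h'
  refine ⟨(hX.smul a).add (hX'.smul b), (hU.smul a).add (hU'.smul b), ?_, ?_, fun i => ?_,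
    fun i => ?_, fun i => ?_, fun i => ?_, fun j => ?_, fun i => ?_, fun i => ?_,
    fun i j => ?_, fun i j => ?_, fun i j => ?_, fun i j => ?_, fun i j => ?_, fun i j => ?_⟩ <;>
    simp only [Prod.fst_add, Prod.snd_add, Prod.smul_fst, Prod.smul_snd, Pi.add_apply,
      Pi.smul_apply, Matrix.add_apply, Matrix.smul_apply, smul_eq_mul, Finset.sum_add_distrib,
      ← Finset.mul_sum, hx, hx', hu, hu', hUu, hUu', hXx, hXx', hRu, hRu', hRx, hRx', hUρ, hUρ']
  · linear_combination hab
  · linear_combination (ρ : ℝ) * hab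
  · exact comb_le (hxu i) (hxu' i)
  · exact comb_nonneg (hx0 i) (hx0' i)
  · ring
  · ring
  · linarith [comb_nonneg (hmix i j) (hmix' i j)]
  · linarith [comb_nonpos (hXR i j) (hXR' i j)]
  · linarith [comb_nonpos (hRU i j) (hRU' i j)]
  · exact comb_nonneg (hX0 i j) (hX0' i j)
  · exact comb_nonneg (hR0 i j) (hR0' i j)
  · exact comb_nonneg (hU0 i j) (hU0' i j)

variable {n : ℕ}

def pairTuple (a b χ : Fin n → ℝ) : (Fin n → ℝ) × (Fin n → ℝ) × Matrix (Fin n) (Fin n) ℝ ×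
    Matrix (Fin n) (Fin n) ℝ × Matrix (Fin n) (Fin n) ℝ :=
  ((2 : ℝ)⁻¹ • (a + b), χ, (2 : ℝ)⁻¹ • (vecMulVec a b + vecMulVec b a), vecMulVec χ χ,
    vecMulVec ((2 : ℝ)⁻¹ • (a + b)) χ)

theorem pairTuple_mem_r1FeasibleSet {ρ : ℕ} {a b χ : Fin n → ℝ} (hχ : ∀ k, χ k * χ k = χ k)
    (hχρ : ∑ k, χ k = ρ) (ha : ∀ k, 0 ≤ a k) (hb : ∀ k, 0 ≤ b k) (haχ : ∀ k, a k ≤ χ k)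
    (hbχ : ∀ k, b k ≤ χ k) (ha1 : ∑ k, a k = 1) (hb1 : ∑ k, b k = 1) :
    pairTuple a b χ ∈ r1FeasibleSet n ρ := by
  have hχ0 k : 0 ≤ χ k := (ha k).trans (haχ k)
  refine ⟨?_, ?_, ?_, hχρ, fun k => ?_, fun k => ?_, hχ, fun k => ?_, fun l => ?_, fun k => ?_,
    fun k => ?_, fun k l => ?_, fun k l => ?_, fun k l => ?_, fun k l => ?_, fun k l => ?_,
    fun k l => ?_⟩ <;>
    simp only [pairTuple, Pi.add_apply, Pi.smul_apply, Matrix.add_apply, Matrix.smul_apply,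
      vecMulVec_apply, smul_eq_mul, Finset.sum_add_distrib, ← Finset.mul_sum, ← Finset.sum_mul,
      ha1, hb1, hχρ]
  · exact IsSymm.ext fun k l => by
      simp only [Matrix.add_apply, Matrix.smul_apply, vecMulVec_apply, smul_eq_mul]; ring
  · exact IsSymm.ext fun k l => by simp only [vecMulVec_apply]; ring
  · norm_num
  · linarith [haχ k, hbχ k]
  · linarith [ha k, hb k]
  · ring
  · norm_num
  · ring
  · ring
  -- `X - Rᵀ - R + U = ((χ - a)(χ - b)ᵀ + (χ - b)(χ - a)ᵀ) / 2`
  · nlinarith [mul_nonneg (sub_nonneg.2 (haχ k)) (sub_nonneg.2 (hbχ l)),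
      mul_nonneg (sub_nonneg.2 (hbχ k)) (sub_nonneg.2 (haχ l))]
  · nlinarith [mul_nonneg (sub_nonneg.2 (haχ k)) (hb l), mul_nonneg (sub_nonneg.2 (hbχ k)) (ha l)]
  · nlinarith [mul_nonneg (sub_nonneg.2 (haχ k)) (hχ0 l), mul_nonneg (sub_nonneg.2 (hbχ k)) (hχ0 l)]
  · exact mul_nonneg (by norm_num)
      (add_nonneg (mul_nonneg (ha k) (hb l)) (mul_nonneg (hb k) (ha l)))
  · exact mul_nonneg (mul_nonneg (by norm_num) (add_nonneg (ha k) (hb k))) (hχ0 l)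
  · exact mul_nonneg (hχ0 k) (hχ0 l)

theorem pairTuple_single_indicator_mem_r1FeasibleSet {ρ : ℕ} {T : Finset (Fin n)}
    (hT : T.card = ρ) {i j : Fin n} (hi : i ∈ T) (hj : j ∈ T) :
    pairTuple (Pi.single i 1) (Pi.single j 1) ((T : Set (Fin n)).indicator 1) ∈
      r1FeasibleSet n ρ := by
  classical
  have single_le {i : Fin n} (hi : i ∈ T) k :
      (Pi.single i 1 : Fin n → ℝ) k ≤ (T : Set (Fin n)).indicator 1 k := by
    rw [Pi.single_apply, Set.indicator_apply]
    split_ifs <;> simp_all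
  apply pairTuple_mem_r1FeasibleSet
  · intro k; by_cases hk : k ∈ T <;> simp [hk]
  · simp [Finset.sum_indicator_eq_sum_inter, hT]
  · intro k; by_cases hk : k = i <;> simp [hk]
  · intro k; by_cases hk : k = j <;> simp [hk]
  · exact single_le hi
  · exact single_le hj
  · simp
  · simp

theorem sum_smul_half_add_single {x : Fin n → ℝ} {X : Matrix (Fin n) (Fin n) ℝ} (hX : X.IsSymm)
    (hXx : ∀ i, ∑ j, X i j = x i) :
    ∑ p : Fin n × Fin n, X p.1 p.2 • (2 : ℝ)⁻¹ • (Pi.single p.1 1 + Pi.single p.2 1) = x := by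
  ext k
  have hcol : ∑ i, X i k = x k := by simpa only [hX.apply k] using hXx k
  simp [Finset.sum_apply, Fintype.sum_prod_type, Pi.single_apply, Finset.sum_add_distrib,
    ← Finset.sum_mul, hXx, hcol]
  ring

theorem sum_smul_half_add_vecMulVec_single {X : Matrix (Fin n) (Fin n) ℝ} (hX : X.IsSymm) :
    ∑ p : Fin n × Fin n, X p.1 p.2 • (2 : ℝ)⁻¹ • (vecMulVec (Pi.single p.1 1) (Pi.single p.2 1) +
      vecMulVec (Pi.single p.2 1) (Pi.single p.1 1)) = X := by
  ext k l
  simp [Matrix.sum_apply, Fintype.sum_prod_type, Pi.single_apply, vecMulVec_apply,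
    Finset.sum_add_distrib, hX.apply k l]
  ring

end R1Relaxation

theorem stmt4_general {n : ℕ} (ρ : ℕ) (h1 : 2 ≤ ρ) (h2 : ρ ≤ n) :
    FR1proj n ρ = FR1 n := by
  ext ⟨x, X⟩
  simp only [FR1proj, FR1, Set.mem_ofPred_eq]
  constructor
  · rintro ⟨u, U, R, hX, -, hx1, -, -, hx0, -, hXx, -, -, -, -, -, -, hX0, -, -⟩
    exact ⟨hX, hx1, hXx, hx0, hX0⟩
  rintro ⟨hX, hx1, hXx, hx0, hX0⟩
  choose T hijT hT using fun i j : Fin n =>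
    Finset.exists_superset_card_eq (s := {i, j}) (Finset.card_le_two.trans h1) (by simpa using h2)
  have hw : ∑ p : Fin n × Fin n, X p.1 p.2 = 1 := by
    simpa only [Fintype.sum_prod_type, hXx] using hx1
  have hmem := (convex_r1FeasibleSet n ρ).sum_mem (fun p _ => hX0 p.1 p.2) hw
    (z := fun p =>
      pairTuple (Pi.single p.1 1) (Pi.single p.2 1) ((T p.1 p.2 : Set (Fin n)).indicator 1))
    fun p _ => pairTuple_single_indicator_mem_r1FeasibleSet (hT p.1 p.2)
      (hijT p.1 p.2 (by simp)) (hijT p.1 p.2 (by simp))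
  simp only [r1FeasibleSet, Set.mem_ofPred_eq, Prod.fst_sum, Prod.snd_sum, Prod.smul_fst,
    Prod.smul_snd, pairTuple] at hmem
  rw [sum_smul_half_add_single hX hXx, sum_smul_half_add_vecMulVec_single hX] at hmem
  exact ⟨_, _, _, hmem⟩

theorem stmt4 {n : ℕ} (hn : 0 < n) (ρ : ℕ) (h1 : 2 ≤ ρ) (h2 : ρ ≤ n) :
    FR1proj n ρ = FR1 n :=
  stmt4_general ρ h1 h2

end
end

section
/- For every symmetric matrix Q ∈ S^n: (i) ℓ^{R1}_1(Q) = ℓ_1(Q) = min_{1≤k≤n} Q_{kk}; (ii) for each ρ ∈ {2,3,…,n}, ℓ^{R1}_ρ(Q) = min_{1≤i≤j≤n} Q_{ij}. -/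
open Matrix BigOperators

noncomputable section

def ellR1 {n : ℕ} (Q : Matrix (Fin n) (Fin n) ℝ) (ρ : ℕ) : ℝ :=
  sInf ((fun p => ip Q p.2) '' FR1proj n ρ)

/-
The R1 constraints force `X ≥ 0` with total mass `eᵀXe = eᵀx = 1`, so `⟨Q, X⟩` is at least the
smallest entry of `Q` on the support of `X`. For `ρ = 1` the rows of `U ≥ 0` sum to their diagonal
entries, so `U`, hence `R ≤ U` and `X ≤ Rᵀ`, is diagonal and only the diagonal of `Q` counts.
Conversely, for `a, b` in a set `S` of size `ρ`, the point `x = (e_a + e_b)/2`,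
`X = (e_a e_bᵀ + e_b e_aᵀ)/2`, `u = 1_S`, `U = u uᵀ`, `R = x uᵀ` is R1(ρ)-feasible with
`⟨Q, X⟩ = Q_ab`; for `ρ ≥ 2` every pair `a, b` fits into such an `S`. Finally, the 1-sparse points
of the simplex are its vertices `e_k`, with value `Q_kk`.
-/

section PairConstruction

variable {n : ℕ}

def pairMean (p q : Fin n → ℝ) : Fin n → ℝ := fun i => (p i + q i) / 2

def symmOuter (p q : Fin n → ℝ) : Matrix (Fin n) (Fin n) ℝ :=
  Matrix.of fun i j => (p i * q j + q i * p j) / 2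

lemma symmOuter_sub_add_vecMulVec_nonneg {p q v : Fin n → ℝ} (hpv : ∀ i, p i ≤ v i)
    (hqv : ∀ i, q i ≤ v i) (i j : Fin n) :
    0 ≤ symmOuter p q i j - vecMulVec (pairMean p q) v j i - vecMulVec (pairMean p q) v i j
      + vecMulVec v v i j := by
  -- With `w = v - x` and `d = p - q` the entry is `w_i w_j - d_i d_j / 4`, and `|d| ≤ 2 w`.
  have hgap : ∀ i, |p i - q i| ≤ 2 * (v i - pairMean p q i) := fun i => by
    simp only [pairMean]; exact abs_le.mpr ⟨by linarith [hqv i], by linarith [hpv i]⟩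
  have hprod : |(p i - q i) * (p j - q j)| ≤
      2 * (v i - pairMean p q i) * (2 * (v j - pairMean p q j)) :=
    abs_mul (p i - q i) (p j - q j) ▸
      mul_le_mul (hgap i) (hgap j) (abs_nonneg _) ((abs_nonneg _).trans (hgap i))
  have hentry : symmOuter p q i j - vecMulVec (pairMean p q) v j i
      - vecMulVec (pairMean p q) v i j + vecMulVec v v i j =
      (v i - pairMean p q i) * (v j - pairMean p q j) - (p i - q i) * (p j - q j) / 4 := by
    simp only [symmOuter, pairMean, vecMulVec_apply, of_apply]; ring
  rw [hentry]
  linarith [le_abs_self ((p i - q i) * (p j - q j))]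

lemma r1Feasible_pair {ρ : ℕ} {p q v : Fin n → ℝ} (hp : ∀ i, 0 ≤ p i)
    (hq : ∀ i, 0 ≤ q i) (hp1 : ∑ i, p i = 1) (hq1 : ∑ i, q i = 1) (hpv : ∀ i, p i ≤ v i)
    (hqv : ∀ i, q i ≤ v i) (hv : ∀ i, v i * v i = v i) (hvρ : ∑ i, v i = ρ) :
    R1Feasible ρ (pairMean p q) v (symmOuter p q) (vecMulVec v v)
      (vecMulVec (pairMean p q) v) := by
  have hv0 : ∀ i, 0 ≤ v i := fun i => (hp i).trans (hpv i)
  have hx1 : ∑ i, pairMean p q i = 1 := by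
    simp only [pairMean, ← Finset.sum_div, Finset.sum_add_distrib, hp1, hq1]; norm_num
  have hxv : ∀ i, pairMean p q i ≤ v i := fun i => by
    simp only [pairMean]; linarith [hpv i, hqv i]
  have hx0 : ∀ i, 0 ≤ pairMean p q i := fun i => by
    simp only [pairMean]; linarith [hp i, hq i]
  refine ⟨?_, ?_, hx1, hvρ, hxv, hx0, hv, fun i => ?_, fun j => ?_, fun i => ?_, fun i => ?_,
    symmOuter_sub_add_vecMulVec_nonneg hpv hqv, fun i j => ?_, fun i j => ?_,
    fun i j => ?_, fun i j => mul_nonneg (hx0 i) (hv0 j), fun i j => mul_nonneg (hv0 i) (hv0 j)⟩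
  · ext i j; simp only [symmOuter, transpose_apply, of_apply]; ring
  · ext i j; simp only [transpose_apply, vecMulVec_apply]; ring
  · simp only [symmOuter, pairMean, of_apply, ← Finset.sum_div, Finset.sum_add_distrib,
      ← Finset.mul_sum, hp1, hq1, mul_one]
  · simp only [vecMulVec_apply, ← Finset.sum_mul, hx1, one_mul]
  · simp only [vecMulVec_apply]; rw [← Finset.mul_sum, hvρ, mul_comm]
  · simp only [vecMulVec_apply]; rw [← Finset.mul_sum, hvρ, mul_comm]
  · simp only [symmOuter, pairMean, vecMulVec_apply, of_apply]
    linarith [mul_le_mul_of_nonneg_right (hpv i) (hq j),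
      mul_le_mul_of_nonneg_right (hqv i) (hp j)]
  · simp only [vecMulVec_apply]
    linarith [mul_le_mul_of_nonneg_right (hxv i) (hv0 j)]
  · exact div_nonneg (add_nonneg (mul_nonneg (hp i) (hq j)) (mul_nonneg (hq i) (hp j)))
      zero_le_two

end PairConstruction

section LowerBounds

variable {n : ℕ}

lemma le_ip_of_forall_ne_zero {Q X : Matrix (Fin n) (Fin n) ℝ} {m : ℝ}
    (hX : ∀ i j, 0 ≤ X i j) (hX1 : ∑ i, ∑ j, X i j = 1) (hQ : ∀ i j, X i j ≠ 0 → m ≤ Q i j) :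
    m ≤ ip Q X := by
  have hterm : ∀ i j, m * X i j ≤ Q i j * X i j := fun i j => by
    by_cases h : X i j = 0
    · simp [h]
    · exact mul_le_mul_of_nonneg_right (hQ i j h) (hX i j)
  calc m = ∑ i, ∑ j, m * X i j := by simp only [← Finset.mul_sum, hX1, mul_one]
    _ ≤ ip Q X := Finset.sum_le_sum fun i _ => Finset.sum_le_sum fun j _ => hterm i j

variable {ρ : ℕ} {x u : Fin n → ℝ} {X U R : Matrix (Fin n) (Fin n) ℝ}

lemma R1Feasible.le_ip (hf : R1Feasible ρ x u X U R) {Q : Matrix (Fin n) (Fin n) ℝ}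
    {m : ℝ} (hQ : ∀ i j, X i j ≠ 0 → m ≤ Q i j) : m ≤ ip Q X := by
  obtain ⟨-, -, hx1, -, -, -, -, hXrow, -, -, -, -, -, -, hX, -⟩ := hf
  exact le_ip_of_forall_ne_zero hX (by simp only [hXrow, hx1]) hQ

lemma R1Feasible.eq_zero_of_ne (hf : R1Feasible 1 x u X U R) {i j : Fin n} (hij : i ≠ j) :
    X i j = 0 := by
  obtain ⟨-, -, -, -, -, -, hUdiag, -, -, -, hUrow, -, hXR, hRU, hX, -, hU⟩ := hf
  have hUji : U j i ≤ 0 := by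
    have hrow := Finset.add_le_sum (f := fun k => U j k) (fun k _ => hU j k)
      (Finset.mem_univ j) (Finset.mem_univ i) hij.symm
    simp only [hUrow, hUdiag, Nat.cast_one, one_mul] at hrow
    linarith
  linarith [hXR i j, hRU j i, hX i j]

end LowerBounds

section Attainment

variable {n : ℕ}

lemma pairMean_single_mem_FR1proj {ρ : ℕ} (a b : Fin n)
    (hab : ({a, b} : Finset (Fin n)).card ≤ ρ) (hρn : ρ ≤ n) :
    (pairMean (Pi.single a 1) (Pi.single b 1), symmOuter (Pi.single a 1) (Pi.single b 1)) ∈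
      FR1proj n ρ := by
  obtain ⟨S, hS, hSρ⟩ := Finset.exists_superset_card_eq hab (by simpa using hρn)
  have hmem : ∀ c ∈ ({a, b} : Finset (Fin n)), ∀ i,
      (Pi.single c 1 : Fin n → ℝ) i ≤ if i ∈ S then 1 else 0 :=
    fun c hc i => by
      rcases eq_or_ne i c with rfl | h
      · simp [hS hc]
      · simp only [Pi.single_apply, h, if_false]; split_ifs <;> norm_num
  refine ⟨_, _, _, r1Feasible_pair (fun i => ?_) (fun i => ?_) (by simp) (by simp)
    (hmem a (by simp)) (hmem b (by simp)) (fun i => by split_ifs <;> norm_num) ?_⟩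
  · simp only [Pi.single_apply]; split_ifs <;> norm_num
  · simp only [Pi.single_apply]; split_ifs <;> norm_num
  · simp [Finset.sum_ite_mem, hSρ]

lemma ip_symmOuter_single (Q : Matrix (Fin n) (Fin n) ℝ) (a b : Fin n) :
    ip Q (symmOuter (Pi.single a 1) (Pi.single b 1)) = (Q a b + Q b a) / 2 := by
  simp only [ip, symmOuter, of_apply, mul_div_assoc', ← Finset.sum_div, mul_add,
    Finset.sum_add_distrib, Pi.single_apply, mul_ite, mul_zero, mul_one, Finset.sum_ite_eq',
    Finset.mem_univ, if_true, add_div]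

end Attainment

section SparseOne

variable {n : ℕ}

lemma single_mem_sparseF_one (k : Fin n) : Pi.single k 1 ∈ sparseF n 1 := by
  refine ⟨⟨by simp, fun i => ?_⟩, ?_⟩
  · simp only [Pi.single_apply]; split_ifs <;> norm_num
  · have hsupp : {i | (Pi.single k 1 : Fin n → ℝ) i ≠ 0} = {k} := by
      ext i; simp [Pi.single_apply]
    simp [sparsity, hsupp]

lemma exists_eq_single_of_mem_sparseF_one {x : Fin n → ℝ} (hx : x ∈ sparseF n 1) :
    ∃ k, x = Pi.single k 1 := by
  obtain ⟨⟨hx1, -⟩, hsp⟩ := hx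
  obtain ⟨k, hk⟩ : ∃ k, x k ≠ 0 := by
    by_contra! h
    simp [h] at hx1
  have hzero : ∀ i, i ≠ k → x i = 0 := fun i hik => by
    by_contra hi
    exact hik ((Set.ncard_le_one (Set.toFinite _)).mp hsp i hi k hk)
  have hxk : x k = 1 := by
    rwa [Finset.sum_eq_single k (fun i _ => hzero i) (by simp)] at hx1
  refine ⟨k, funext fun i => ?_⟩
  rcases eq_or_ne i k with rfl | h
  · simp [hxk]
  · simp [hzero i h, h]

lemma quadForm_single (Q : Matrix (Fin n) (Fin n) ℝ) (k : Fin n) :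
    quadForm Q (Pi.single k 1) = Q k k := by
  simp [quadForm]

end SparseOne

section Minima

variable {n : ℕ} {Q : Matrix (Fin n) (Fin n) ℝ}

lemma isLeast_quadForm_sparseF_one {k : Fin n} (hk : ∀ i, Q k k ≤ Q i i) :
    IsLeast (quadForm Q '' sparseF n 1) (Q k k) := by
  refine ⟨⟨_, single_mem_sparseF_one k, quadForm_single Q k⟩, ?_⟩
  rintro _ ⟨x, hx, rfl⟩
  obtain ⟨i, rfl⟩ := exists_eq_single_of_mem_sparseF_one hx
  simpa [quadForm_single] using hk i

lemma isLeast_ip_FR1proj_one {k : Fin n} (hk : ∀ i, Q k k ≤ Q i i) :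
    IsLeast ((fun p => ip Q p.2) '' FR1proj n 1) (Q k k) := by
  refine ⟨⟨_, pairMean_single_mem_FR1proj k k (by simp) k.pos, ?_⟩, ?_⟩
  · simp [ip_symmOuter_single]
  · rintro _ ⟨⟨x, X⟩, ⟨u, U, R, hf⟩, rfl⟩
    refine hf.le_ip fun i j hij => ?_
    obtain rfl : i = j := by_contra fun h => hij (hf.eq_zero_of_ne h)
    exact hk i

lemma isLeast_ip_FR1proj (hQ : Q.IsSymm) {ρ : ℕ} (hρ : 2 ≤ ρ) (hρn : ρ ≤ n) {a b : Fin n}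
    (hab : ∀ i j, Q a b ≤ Q i j) :
    IsLeast ((fun p => ip Q p.2) '' FR1proj n ρ) (Q a b) := by
  refine ⟨⟨_, pairMean_single_mem_FR1proj a b (Finset.card_le_two.trans hρ) hρn, ?_⟩, ?_⟩
  · simp [ip_symmOuter_single, hQ.apply a b]
  · rintro _ ⟨⟨x, X⟩, ⟨u, U, R, hf⟩, rfl⟩
    exact hf.le_ip fun i j _ => hab i j

lemma exists_inf'_upperTriangle_eq_le (hQ : Q.IsSymm)
    (H : (Finset.univ.filter fun p : Fin n × Fin n => p.1 ≤ p.2).Nonempty) :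
    ∃ a b, (Finset.univ.filter fun p : Fin n × Fin n => p.1 ≤ p.2).inf' H (fun p => Q p.1 p.2) =
      Q a b ∧ ∀ i j, Q a b ≤ Q i j := by
  obtain ⟨⟨a, b⟩, -, hab⟩ := Finset.exists_mem_eq_inf' H fun p => Q p.1 p.2
  refine ⟨a, b, hab, fun i j => ?_⟩
  rw [← hab]
  rcases le_total i j with h | h
  · exact Finset.inf'_le _ (Finset.mem_filter.mpr ⟨Finset.mem_univ (i, j), h⟩)
  · exact hQ.apply j i ▸ Finset.inf'_le _ (Finset.mem_filter.mpr ⟨Finset.mem_univ (j, i), h⟩)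

end Minima

theorem stmt5 {n : ℕ} (hn : 0 < n) (Q : Matrix (Fin n) (Fin n) ℝ) (hQ : Q.IsSymm) :
    (ellR1 Q 1 = ellSparse Q 1 ∧
      ellSparse Q 1 = (Finset.univ.inf' (Finset.univ_nonempty_iff.mpr ⟨⟨0, hn⟩⟩) fun k => Q k k)) ∧
    ∀ ρ : ℕ, 2 ≤ ρ → ρ ≤ n →
      ellR1 Q ρ =
        (Finset.univ.filter fun p : Fin n × Fin n => p.1 ≤ p.2).inf'
        (Finset.filter_nonempty_iff.mpr ⟨(⟨0, hn⟩, ⟨0, hn⟩), Finset.mem_univ _, le_rfl⟩)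
        (fun p => Q p.1 p.2) := by
  obtain ⟨k, -, hk⟩ := Finset.exists_mem_eq_inf' (Finset.univ_nonempty_iff.mpr ⟨⟨0, hn⟩⟩)
    fun k => Q k k
  have hkmin : ∀ i, Q k k ≤ Q i i := fun i => hk ▸ Finset.inf'_le _ (Finset.mem_univ i)
  have hSparse : ellSparse Q 1 = Q k k := (isLeast_quadForm_sparseF_one hkmin).csInf_eq
  refine ⟨⟨(isLeast_ip_FR1proj_one hkmin).csInf_eq.trans hSparse.symm, hSparse.trans hk.symm⟩,
    fun ρ hρ hρn => ?_⟩
  obtain ⟨a, b, hab, habmin⟩ := exists_inf'_upperTriangle_eq_le hQ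
    (Finset.filter_nonempty_iff.mpr ⟨(⟨0, hn⟩, ⟨0, hn⟩), Finset.mem_univ _, le_rfl⟩)
  rw [hab]
  exact (isLeast_ip_FR1proj hQ hρ hρn habmin).csInf_eq

end
end

section
/- Let Q ∈ S^n. If Q is positive semidefinite, then inf{⟨Q,X⟩ : (x,X) ∈ F^{R2}} = ℓ(Q). If Q is not positive semidefinite, then this infimum is −∞, i.e., for every M ∈ ℝ there exists (x,X) ∈ F^{R2} with ⟨Q,X⟩ < M. -/
open Matrix BigOperators

noncomputable section

def FR2 (n : ℕ) : Set ((Fin n → ℝ) × Matrix (Fin n) (Fin n) ℝ) :=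
  {p | p.2.IsSymm ∧ (∑ i, p.1 i) = 1 ∧ (∀ i, 0 ≤ p.1 i) ∧
    (p.2 - Matrix.vecMulVec p.1 p.1).PosSemidef}

/-!
For `(x, X) ∈ F^{R2}` we have `⟨Q, X⟩ = xᵀQx + ⟨Q, X - xxᵀ⟩`, and `(x, xxᵀ) ∈ F^{R2}`.
When `Q` is positive semidefinite the last term is the trace of a product of two positive
semidefinite matrices, hence nonnegative, so both infima are the same. Otherwise,
`vᵀQv < 0` for some `v`, and along `(x, xxᵀ + t vvᵀ)` the objective `xᵀQx + t vᵀQv` tends to `-∞`.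
-/

section TraceNonneg

open scoped MatrixOrder ComplexOrder

variable {m 𝕜 : Type*} [Fintype m] [DecidableEq m] [RCLike 𝕜]

lemma Matrix.PosSemidef.trace_mul_nonneg {A B : Matrix m m 𝕜} (hA : A.PosSemidef)
    (hB : B.PosSemidef) : 0 ≤ (A * B).trace := by
  set S := CFC.sqrt A
  have hS : Sᴴ = S := (CFC.sqrt_nonneg A).posSemidef.1
  have hA_eq : A = Sᴴ * S := by rw [hS, CFC.sqrt_mul_sqrt_self A hA.nonneg]
  rw [hA_eq, mul_assoc, trace_mul_comm]
  exact (hB.mul_mul_conjTranspose_same S).trace_nonneg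

end TraceNonneg

section InnerProduct

variable {n : ℕ}

lemma ip_eq_trace (Q X : Matrix (Fin n) (Fin n) ℝ) : ip Q X = (Qᵀ * X).trace := by
  simp only [ip, Matrix.trace, diag_apply, mul_apply, transpose_apply]
  exact Finset.sum_comm

lemma ip_add (Q X Y : Matrix (Fin n) (Fin n) ℝ) : ip Q (X + Y) = ip Q X + ip Q Y := by
  simp only [ip_eq_trace, Matrix.mul_add, trace_add]

lemma ip_smul (Q X : Matrix (Fin n) (Fin n) ℝ) (t : ℝ) : ip Q (t • X) = t * ip Q X := by
  simp only [ip_eq_trace, Matrix.mul_smul, trace_smul, smul_eq_mul]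

lemma ip_vecMulVec (Q : Matrix (Fin n) (Fin n) ℝ) (v : Fin n → ℝ) :
    ip Q (vecMulVec v v) = quadForm Q v := by
  rw [ip_eq_trace, mul_vecMulVec, trace_vecMulVec, mulVec_transpose, ← dotProduct_mulVec,
    quadForm]

lemma ip_nonneg {Q X : Matrix (Fin n) (Fin n) ℝ} (hQ : Q.PosSemidef) (hX : X.PosSemidef) :
    0 ≤ ip Q X := by
  rw [ip_eq_trace, ← conjTranspose_eq_transpose_of_trivial, hQ.1]
  exact hQ.trace_mul_nonneg hX

end InnerProduct

section Relaxation

variable {n : ℕ}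

lemma posSemidef_vecMulVec_self {ι : Type*} [Fintype ι] (v : ι → ℝ) :
    (vecMulVec v v).PosSemidef := by
  simpa using posSemidef_vecMulVec_self_star v

lemma single_mem_simplexF (i : Fin n) : Pi.single i 1 ∈ simplexF n := by
  refine ⟨by simp, fun j => ?_⟩
  rcases eq_or_ne j i with rfl | h <;> simp [*]

lemma mem_FR2_of_posSemidef_sub {x : Fin n → ℝ} (hx : x ∈ simplexF n)
    {X : Matrix (Fin n) (Fin n) ℝ} (hX : (X - vecMulVec x x).PosSemidef) : (x, X) ∈ FR2 n := by
  refine ⟨?_, hx.1, hx.2, hX⟩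
  simpa using hX.1.add (posSemidef_vecMulVec_self x).1

lemma vecMulVec_mem_FR2 {x : Fin n → ℝ} (hx : x ∈ simplexF n) :
    (x, vecMulVec x x) ∈ FR2 n :=
  mem_FR2_of_posSemidef_sub hx (by simpa using PosSemidef.zero)

lemma quadForm_le_ip_of_mem_FR2 {Q : Matrix (Fin n) (Fin n) ℝ} (hQ : Q.PosSemidef)
    {p : (Fin n → ℝ) × Matrix (Fin n) (Fin n) ℝ} (hp : p ∈ FR2 n) :
    quadForm Q p.1 ≤ ip Q p.2 := by
  have h := ip_add Q (p.2 - vecMulVec p.1 p.1) (vecMulVec p.1 p.1)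
  rw [sub_add_cancel, ip_vecMulVec] at h
  linarith [ip_nonneg hQ hp.2.2.2]

theorem sInf_ip_FR2_eq_ell {Q : Matrix (Fin n) (Fin n) ℝ} (hQ : Q.PosSemidef) :
    sInf ((fun p => ip Q p.2) '' FR2 n) = ell Q := by
  refine csInf_eq_csInf_of_forall_exists_le ?_ ?_
  · rintro _ ⟨p, hp, rfl⟩
    exact ⟨quadForm Q p.1, ⟨p.1, ⟨hp.2.1, hp.2.2.1⟩, rfl⟩,
      quadForm_le_ip_of_mem_FR2 hQ hp⟩
  · rintro _ ⟨x, hx, rfl⟩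
    exact ⟨ip Q (vecMulVec x x), ⟨_, vecMulVec_mem_FR2 hx, rfl⟩, (ip_vecMulVec Q x).le⟩

lemma exists_quadForm_neg {Q : Matrix (Fin n) (Fin n) ℝ} (hQ : Q.IsSymm)
    (hQ' : ¬Q.PosSemidef) : ∃ v, quadForm Q v < 0 := by
  by_contra! h
  exact hQ' (.of_dotProduct_mulVec_nonneg (isHermitian_iff_isSymm.mpr hQ) fun x => by
    simpa [quadForm] using h x)

theorem exists_mem_FR2_ip_lt {Q : Matrix (Fin n) (Fin n) ℝ} {v : Fin n → ℝ}
    (hv : quadForm Q v < 0) (M : ℝ) : ∃ p ∈ FR2 n, ip Q p.2 < M := by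
  obtain ⟨i⟩ : Nonempty (Fin n) := by
    rcases isEmpty_or_nonempty (Fin n) with h | h
    · simp [quadForm] at hv
    · exact h
  obtain ⟨x, hx⟩ : (simplexF n).Nonempty := ⟨_, single_mem_simplexF i⟩
  obtain ⟨t, ht, hlt⟩ := ((Filter.eventually_ge_atTop 0).and <|
    (Filter.tendsto_atBot_add_const_left _ (quadForm Q x)
      ((Filter.tendsto_id (α := ℝ)).atTop_mul_const_of_neg hv)).eventually
      (Filter.eventually_lt_atBot M)).exists
  refine ⟨(x, vecMulVec x x + t • vecMulVec v v),
    mem_FR2_of_posSemidef_sub hx (by simpa using (posSemidef_vecMulVec_self v).smul ht), ?_⟩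
  rwa [ip_add, ip_smul, ip_vecMulVec, ip_vecMulVec]

end Relaxation

theorem stmt7_general {n : ℕ} (Q : Matrix (Fin n) (Fin n) ℝ) (hQ : Q.IsSymm) :
    (Q.PosSemidef → sInf ((fun p => ip Q p.2) '' FR2 n) = ell Q) ∧
    (¬Q.PosSemidef → ∀ M : ℝ, ∃ p ∈ FR2 n, ip Q p.2 < M) := by
  refine ⟨sInf_ip_FR2_eq_ell, fun hQ' => ?_⟩
  obtain ⟨v, hv⟩ := exists_quadForm_neg hQ hQ'
  exact exists_mem_FR2_ip_lt hv

theorem stmt7 {n : ℕ} (hn : 0 < n) (Q : Matrix (Fin n) (Fin n) ℝ) (hQ : Q.IsSymm) :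
    (Q.PosSemidef → sInf ((fun p => ip Q p.2) '' FR2 n) = ell Q) ∧
    (¬Q.PosSemidef → ∀ M : ℝ, ∃ p ∈ FR2 n, ip Q p.2 < M) :=
  stmt7_general Q hQ

end
end

section
/- For each ρ ∈ {1,2,…,n}, F^{R2}_ρ = F^{R2}, i.e., the projection of the Shor-relaxation feasible set of the sparse StQP onto (x,X) equals the Shor-relaxation feasible set of the unconstrained standard quadratic program. -/
/-!
Taking the Schur complement of the leading entry `1`, the big matrix is positive semidefinite
iff `[[X - x xᵀ, R - x uᵀ], [Rᵀ - u xᵀ, U - u uᵀ]]` is, and its leading block gives `X - x xᵀ ⪰ 0`.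
Conversely, pick for every `k` a set `S k ∋ k` of size `ρ` with indicator vector `s k`, and lift
`(x, X)` by `u = ∑ xₖ sₖ`, `U = ∑ xₖ sₖ sₖᵀ`, `R = x uᵀ`. The off-diagonal blocks then vanish and
`U - u uᵀ` is the covariance of the points `sₖ` under the distribution `x`, hence positive
semidefinite. Since each `sₖ` is `0/1`-valued with `sₖ k = 1` and `ρ` ones, `diag U = u`, `x ≤ u`
and `∑ u = ρ`.
-/

open Matrix BigOperators

noncomputable section

def bigMat {n : ℕ} (x u : Fin n → ℝ) (X U R : Matrix (Fin n) (Fin n) ℝ) :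
    Matrix (Unit ⊕ (Fin n ⊕ Fin n)) (Unit ⊕ (Fin n ⊕ Fin n)) ℝ :=
  Matrix.fromBlocks (Matrix.of fun _ _ => (1 : ℝ))
    (Matrix.of fun (_ : Unit) j => Sum.elim x u j)
    (Matrix.of fun i (_ : Unit) => Sum.elim x u i)
    (Matrix.fromBlocks X R Rᵀ U)

def R2Feasible {n : ℕ} (ρ : ℕ) (x u : Fin n → ℝ)
    (X U R : Matrix (Fin n) (Fin n) ℝ) : Prop :=
  X.IsSymm ∧ U.IsSymm ∧
  (∑ i, x i) = 1 ∧ (∑ i, u i) = (ρ : ℝ) ∧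
  (∀ i, U i i = u i) ∧
  (∀ i, 0 ≤ x i) ∧ (∀ i, x i ≤ u i) ∧
  (bigMat x u X U R).PosSemidef

def FR2proj (n ρ : ℕ) : Set ((Fin n → ℝ) × Matrix (Fin n) (Fin n) ℝ) :=
  {p | ∃ u U R, R2Feasible ρ p.1 u p.2 U R}

theorem Matrix.fromBlocks_sub_vecMulVec_sumElim {l m α : Type*} [Ring α]
    (A : Matrix l l α) (B : Matrix l m α) (C : Matrix m l α) (D : Matrix m m α)
    (x : l → α) (u : m → α) :
    fromBlocks A B C D - vecMulVec (Sum.elim x u) (Sum.elim x u) =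
      fromBlocks (A - vecMulVec x x) (B - vecMulVec x u) (C - vecMulVec u x)
        (D - vecMulVec u u) := by
  ext (i | i) (j | j) <;> rfl

section PosSemidef

variable {l m : Type*} [Fintype l] [Fintype m]

theorem Matrix.PosSemidef.fromBlocks_zero {R : Type*} [CommRing R] [PartialOrder R] [StarRing R]
    [StarOrderedRing R] {A : Matrix l l R} {D : Matrix m m R}
    (hA : A.PosSemidef) (hD : D.PosSemidef) : (fromBlocks A 0 0 D).PosSemidef := by
  refine .of_dotProduct_mulVec_nonneg (hA.isHermitian.fromBlocks (by simp) hD.isHermitian)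
    fun v => ?_
  rw [← Sum.elim_comp_inl_inr v, fromBlocks_mulVec]
  simp only [zero_mulVec, add_zero, zero_add, Function.star_sumElim, sumElim_dotProduct_sumElim]
  exact add_nonneg (hA.dotProduct_mulVec_nonneg _) (hD.dotProduct_mulVec_nonneg _)

theorem Matrix.posSemidef_fromBlocks_one_iff {y : m → ℝ} {M : Matrix m m ℝ} :
    (fromBlocks (of fun _ _ => 1 : Matrix Unit Unit ℝ) (of fun _ j => y j) (of fun i _ => y i)
      M).PosSemidef ↔ (M - vecMulVec y y).PosSemidef := by
  have hA : (of fun _ _ => 1 : Matrix Unit Unit ℝ) = 1 := by ext; simp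
  have hC : (of fun i (_ : Unit) => y i) = (of fun (_ : Unit) j => y j)ᴴ := by ext; simp
  have hyy : (of fun (_ : Unit) j => y j)ᴴ * of (fun (_ : Unit) j => y j) = vecMulVec y y := by
    ext; simp [mul_apply, vecMulVec_apply]
  let := invertibleOne (α := Matrix Unit Unit ℝ)
  rw [hA, hC, PosDef.fromBlocks₁₁ _ _ PosDef.one, inv_one, Matrix.mul_one, hyy]

theorem Matrix.posSemidef_sum_smul_vecMulVec_sub {ι : Type*} [Fintype ι] {w : ι → ℝ}
    (hw0 : ∀ k, 0 ≤ w k) (hw1 : ∑ k, w k = 1) (s : ι → m → ℝ) :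
    (∑ k, w k • vecMulVec (s k) (s k) -
      vecMulVec (∑ k, w k • s k) (∑ k, w k • s k)).PosSemidef := by
  set c := ∑ k, w k • s k with hc
  have hvar : ∑ k, w k • vecMulVec (s k) (s k) - vecMulVec c c
      = ∑ k, w k • vecMulVec (s k - c) (s k - c) := by
    ext i j
    have hci : ∀ i, c i = ∑ k, w k * s k i := fun i => by simp [hc, Finset.sum_apply]
    simp only [Matrix.sub_apply, Matrix.sum_apply, Matrix.smul_apply, vecMulVec_apply,
      Pi.sub_apply, smul_eq_mul]
    rw [Finset.sum_congr rfl fun k _ => show w k * ((s k i - c i) * (s k j - c j))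
        = w k * (s k i * s k j) - w k * s k i * c j - c i * (w k * s k j) + c i * c j * w k by
      ring]
    simp only [Finset.sum_add_distrib, Finset.sum_sub_distrib, ← Finset.sum_mul,
      ← Finset.mul_sum, ← hci, hw1]
    ring
  rw [hvar]
  exact posSemidef_sum _ fun k _ => (posSemidef_vecMulVec_self_star (s k - c)).smul (hw0 k)

end PosSemidef

section R2

variable {n : ℕ} {x u : Fin n → ℝ} {X U R : Matrix (Fin n) (Fin n) ℝ}

theorem posSemidef_bigMat_iff :
    (bigMat x u X U R).PosSemidef ↔
      (fromBlocks (X - vecMulVec x x) (R - vecMulVec x u) (Rᵀ - vecMulVec u x)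
        (U - vecMulVec u u)).PosSemidef := by
  rw [← fromBlocks_sub_vecMulVec_sumElim]
  exact posSemidef_fromBlocks_one_iff

theorem posSemidef_sub_vecMulVec_of_bigMat (h : (bigMat x u X U R).PosSemidef) :
    (X - vecMulVec x x).PosSemidef :=
  (posSemidef_bigMat_iff.mp h).submatrix Sum.inl

theorem posSemidef_bigMat_mixture (hx0 : ∀ k, 0 ≤ x k) (hx1 : ∑ k, x k = 1)
    (hX : (X - vecMulVec x x).PosSemidef) (s : Fin n → Fin n → ℝ) :
    (bigMat x (∑ k, x k • s k) X (∑ k, x k • vecMulVec (s k) (s k))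
      (vecMulVec x (∑ k, x k • s k))).PosSemidef := by
  rw [posSemidef_bigMat_iff, transpose_vecMulVec, sub_self, sub_self]
  exact hX.fromBlocks_zero (posSemidef_sum_smul_vecMulVec_sub hx0 hx1 s)

theorem r2Feasible_of_indicators {ρ : ℕ} (hx0 : ∀ k, 0 ≤ x k) (hx1 : ∑ k, x k = 1)
    (hXsymm : X.IsSymm) (hX : (X - vecMulVec x x).PosSemidef) (S : Fin n → Finset (Fin n))
    (hS : ∀ k, k ∈ S k) (hcard : ∀ k, (S k).card = ρ) :
    let s : Fin n → Fin n → ℝ := fun k j => if j ∈ S k then 1 else 0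
    R2Feasible ρ x (∑ k, x k • s k) X (∑ k, x k • vecMulVec (s k) (s k))
      (vecMulVec x (∑ k, x k • s k)) := by
  intro s
  have hs_idem : ∀ k j, s k j * s k j = s k j := fun k j => by
    by_cases h : j ∈ S k <;> simp [s, h]
  refine ⟨hXsymm, ?_, hx1, ?_, fun i => ?_, hx0, fun i => ?_,
    posSemidef_bigMat_mixture hx0 hx1 hX s⟩
  · simp [IsSymm, transpose_sum, transpose_vecMulVec]
  · have hs_sum : ∀ k, ∑ j, s k j = ρ := fun k => by simp [s, hcard]
    simp only [Finset.sum_apply, Pi.smul_apply, smul_eq_mul]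
    rw [Finset.sum_comm]
    simp only [← Finset.mul_sum, hs_sum, ← Finset.sum_mul, hx1, one_mul]
  · simp [Finset.sum_apply, Matrix.sum_apply, vecMulVec_apply, hs_idem]
  · calc x i = x i * s i i := by simp [s, hS]
      _ ≤ ∑ k, x k * s k i := Finset.single_le_sum
          (fun k _ => mul_nonneg (hx0 k) (show 0 ≤ s k i by positivity)) (Finset.mem_univ i)
      _ = (∑ k, x k • s k) i := by simp [Finset.sum_apply]

end R2

theorem stmt8_general {n : ℕ} (ρ : ℕ) (h1 : 1 ≤ ρ) (h2 : ρ ≤ n) :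
    FR2proj n ρ = FR2 n := by
  ext ⟨x, X⟩
  constructor
  · rintro ⟨u, U, R, hXsymm, -, hx1, -, -, hx0, -, hpsd⟩
    exact ⟨hXsymm, hx1, hx0, posSemidef_sub_vecMulVec_of_bigMat hpsd⟩
  · rintro ⟨hXsymm, hx1, hx0, hX⟩
    have hS_exists : ∀ k : Fin n, ∃ S : Finset (Fin n), k ∈ S ∧ S.card = ρ := fun k => by
      obtain ⟨S, hkS, hS⟩ := Finset.exists_superset_card_eq (s := {k})
        (by simpa using h1) (by simpa using h2)
      exact ⟨S, hkS (Finset.mem_singleton_self k), hS⟩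
    choose S hS hcard using hS_exists
    exact ⟨_, _, _, r2Feasible_of_indicators hx0 hx1 hXsymm hX S hS hcard⟩

theorem stmt8 {n : ℕ} (hn : 0 < n) (ρ : ℕ) (h1 : 1 ≤ ρ) (h2 : ρ ≤ n) :
    FR2proj n ρ = FR2 n :=
  stmt8_general ρ h1 h2

end
end

section
/- For every ρ ∈ {1,…,n}, conv{(x, xxᵀ) : x ∈ F_ρ} ⊆ F^{R3}_ρ, i.e., the convex hull of the lifted ρ-sparse simplex points is contained in the projected SDP-RLT feasible set. -/
open Matrix BigOperators

noncomputable section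

def R3Feasible {n : ℕ} (ρ : ℕ) (x u : Fin n → ℝ)
    (X U R : Matrix (Fin n) (Fin n) ℝ) : Prop :=
  R1Feasible ρ x u X U R ∧ (bigMat x u X U R).PosSemidef

def FR3proj (n ρ : ℕ) : Set ((Fin n → ℝ) × Matrix (Fin n) (Fin n) ℝ) :=
  {p | ∃ u U R, R3Feasible ρ p.1 u p.2 U R}

/-! A lifted point `(x, x xᵀ)` with `x ∈ F_ρ` is the projection of the rank-one point
`(x, u, x xᵀ, u uᵀ, x uᵀ)`, where `u` is the indicator vector of a `ρ`-element set containing the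
support of `x`: the RLT inequalities factor as products of the nonnegative numbers `x i`, `u j`,
`u i - x i`, and the big matrix is `w wᵀ` with `w = (1, x, u)`. The R3 constraints are linear
except for positive semidefiniteness of a matrix depending affinely on the variables, so the
projected feasible set is convex and contains the convex hull. -/

lemma exists_card_eq_support_subset {ι M : Type*} [Fintype ι] [Zero M] {x : ι → M} {ρ : ℕ}
    (hx : (Function.support x).ncard ≤ ρ) (hρ : ρ ≤ Fintype.card ι) :
    ∃ S : Finset ι, S.card = ρ ∧ ∀ i ∉ S, x i = 0 := by
  classical
  rw [Set.ncard_eq_toFinset_card'] at hx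
  obtain ⟨S, hsupp, hcard⟩ := Finset.exists_superset_card_eq hx hρ
  exact ⟨S, hcard, fun i hi => by_contra fun hxi => hi (hsupp (by simpa using hxi))⟩

section RankOne

variable {n ρ : ℕ} {x u : Fin n → ℝ}

lemma R1Feasible_vecMulVec (hx : x ∈ simplexF n) (hu : ∑ i, u i = ρ) (hxu : ∀ i, x i ≤ u i)
    (hu_idem : ∀ i, u i * u i = u i) :
    R1Feasible ρ x u (vecMulVec x x) (vecMulVec u u) (vecMulVec x u) := by
  obtain ⟨hx_sum, hx_nonneg⟩ := hx
  have hu_nonneg i : 0 ≤ u i := (hx_nonneg i).trans (hxu i)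
  have hxu' i : 0 ≤ u i - x i := sub_nonneg.2 (hxu i)
  simp only [R1Feasible, vecMulVec_apply, ← Finset.mul_sum, ← Finset.sum_mul, hx_sum, hu]
  refine ⟨transpose_vecMulVec x x, transpose_vecMulVec u u, trivial, trivial, hxu, hx_nonneg,
    hu_idem, fun i => mul_one _, fun j => one_mul _, fun i => mul_comm _ _, fun i => mul_comm _ _,
    fun i j => ?_, fun i j => ?_, fun i j => ?_,
    fun i j => mul_nonneg (hx_nonneg i) (hx_nonneg j),
    fun i j => mul_nonneg (hx_nonneg i) (hu_nonneg j),
    fun i j => mul_nonneg (hu_nonneg i) (hu_nonneg j)⟩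
  · nlinarith [mul_nonneg (hxu' i) (hxu' j)]
  · nlinarith [mul_nonneg (hx_nonneg j) (hxu' i)]
  · nlinarith [mul_nonneg (hu_nonneg j) (hxu' i)]

lemma bigMat_vecMulVec (x u : Fin n → ℝ) :
    bigMat x u (vecMulVec x x) (vecMulVec u u) (vecMulVec x u) =
      vecMulVec (Sum.elim 1 (Sum.elim x u)) (Sum.elim 1 (Sum.elim x u)) := by
  ext (_ | i | i) (_ | j | j) <;> simp [bigMat, vecMulVec_apply, mul_comm]

end RankOne

section Combination

variable {n ρ : ℕ} {x₁ x₂ u₁ u₂ : Fin n → ℝ} {X₁ X₂ U₁ U₂ R₁ R₂ : Matrix (Fin n) (Fin n) ℝ}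
  {a b : ℝ}

lemma R1Feasible.combo (h₁ : R1Feasible ρ x₁ u₁ X₁ U₁ R₁) (h₂ : R1Feasible ρ x₂ u₂ X₂ U₂ R₂)
    (ha : 0 ≤ a) (hb : 0 ≤ b) (hab : a + b = 1) :
    R1Feasible ρ (a • x₁ + b • x₂) (a • u₁ + b • u₂) (a • X₁ + b • X₂) (a • U₁ + b • U₂)
      (a • R₁ + b • R₂) := by
  obtain ⟨hX₁, hU₁, hx₁, hu₁, hxu₁, hx₁_nonneg, hdiag₁, hXrow₁, hRcol₁, hRrow₁, hUrow₁, hrlt₁,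
    hXR₁, hRU₁, hX₁_nonneg, hR₁_nonneg, hU₁_nonneg⟩ := h₁
  obtain ⟨hX₂, hU₂, hx₂, hu₂, hxu₂, hx₂_nonneg, hdiag₂, hXrow₂, hRcol₂, hRrow₂, hUrow₂, hrlt₂,
    hXR₂, hRU₂, hX₂_nonneg, hR₂_nonneg, hU₂_nonneg⟩ := h₂
  have combo_nonneg {s t : ℝ} (hs : 0 ≤ s) (ht : 0 ≤ t) : 0 ≤ a * s + b * t := by positivity
  simp only [R1Feasible, Pi.add_apply, Pi.smul_apply, Matrix.add_apply, Matrix.smul_apply,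
    smul_eq_mul, Finset.sum_add_distrib, ← Finset.mul_sum, hx₁, hx₂, hu₁, hu₂, hdiag₁, hdiag₂,
    hXrow₁, hXrow₂, hRcol₁, hRcol₂, hRrow₁, hRrow₂, hUrow₁, hUrow₂]
  refine ⟨(hX₁.smul a).add (hX₂.smul b), (hU₁.smul a).add (hU₂.smul b),
    by linear_combination hab, by linear_combination (ρ : ℝ) * hab, fun i => ?_,
    fun i => combo_nonneg (hx₁_nonneg i) (hx₂_nonneg i), fun _ => trivial, fun _ => trivial,
    fun _ => trivial, fun i => by ring, fun i => by ring, fun i j => ?_, fun i j => ?_,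
    fun i j => ?_, fun i j => combo_nonneg (hX₁_nonneg i j) (hX₂_nonneg i j),
    fun i j => combo_nonneg (hR₁_nonneg i j) (hR₂_nonneg i j),
    fun i j => combo_nonneg (hU₁_nonneg i j) (hU₂_nonneg i j)⟩
  · linarith [combo_nonneg (sub_nonneg.2 (hxu₁ i)) (sub_nonneg.2 (hxu₂ i))]
  · linarith [combo_nonneg (hrlt₁ i j) (hrlt₂ i j)]
  · linarith [combo_nonneg (neg_nonneg.2 (hXR₁ i j)) (neg_nonneg.2 (hXR₂ i j))]
  · linarith [combo_nonneg (neg_nonneg.2 (hRU₁ i j)) (neg_nonneg.2 (hRU₂ i j))]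

lemma bigMat_combo (hab : a + b = 1) :
    bigMat (a • x₁ + b • x₂) (a • u₁ + b • u₂) (a • X₁ + b • X₂) (a • U₁ + b • U₂)
      (a • R₁ + b • R₂) = a • bigMat x₁ u₁ X₁ U₁ R₁ + b • bigMat x₂ u₂ X₂ U₂ R₂ := by
  ext (_ | i | i) (_ | j | j) <;> simp [bigMat, hab]

lemma R3Feasible.combo (h₁ : R3Feasible ρ x₁ u₁ X₁ U₁ R₁) (h₂ : R3Feasible ρ x₂ u₂ X₂ U₂ R₂)
    (ha : 0 ≤ a) (hb : 0 ≤ b) (hab : a + b = 1) :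
    R3Feasible ρ (a • x₁ + b • x₂) (a • u₁ + b • u₂) (a • X₁ + b • X₂) (a • U₁ + b • U₂)
      (a • R₁ + b • R₂) :=
  ⟨h₁.1.combo h₂.1 ha hb hab, bigMat_combo hab ▸ (h₁.2.smul ha).add (h₂.2.smul hb)⟩

end Combination

lemma convex_FR3proj (n ρ : ℕ) : Convex ℝ (FR3proj n ρ) := by
  rintro ⟨x₁, X₁⟩ ⟨u₁, U₁, R₁, h₁⟩ ⟨x₂, X₂⟩ ⟨u₂, U₂, R₂, h₂⟩ a b ha hb hab
  exact ⟨_, _, _, h₁.combo h₂ ha hb hab⟩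

lemma vecMulVec_mem_FR3proj {n ρ : ℕ} (hρ : ρ ≤ n) {x : Fin n → ℝ} (hx : x ∈ sparseF n ρ) :
    (x, vecMulVec x x) ∈ FR3proj n ρ := by
  obtain ⟨hx_simplex, hx_sparse⟩ := hx
  obtain ⟨S, hS_card, hx_supp⟩ :=
    exists_card_eq_support_subset (x := x) hx_sparse (by simpa using hρ)
  set u : Fin n → ℝ := fun i => if i ∈ S then 1 else 0
  have hu_sum : ∑ i, u i = ρ := by simp [u, hS_card]
  have hxu i : x i ≤ u i := by
    by_cases hi : i ∈ S
    · simpa [u, hi, ← hx_simplex.1] using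
        Finset.single_le_sum (fun j _ => hx_simplex.2 j) (Finset.mem_univ i)
    · simp [u, hi, hx_supp i hi]
  have hu_idem i : u i * u i = u i := by by_cases hi : i ∈ S <;> simp [u, hi]
  refine ⟨u, vecMulVec u u, vecMulVec x u, R1Feasible_vecMulVec hx_simplex hu_sum hxu hu_idem, ?_⟩
  rw [bigMat_vecMulVec]
  simpa using posSemidef_vecMulVec_self_star (Sum.elim 1 (Sum.elim x u))

theorem stmt11_general {n : ℕ} (ρ : ℕ) (h2 : ρ ≤ n) :
    convexHull ℝ
      {p : (Fin n → ℝ) × Matrix (Fin n) (Fin n) ℝ |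
        ∃ x ∈ sparseF n ρ, p = (x, Matrix.vecMulVec x x)} ⊆ FR3proj n ρ :=
  convexHull_min (by rintro _ ⟨x, hx, rfl⟩; exact vecMulVec_mem_FR3proj h2 hx)
    (convex_FR3proj n ρ)

theorem stmt11 {n : ℕ} (hn : 0 < n) (ρ : ℕ) (h1 : 1 ≤ ρ) (h2 : ρ ≤ n) :
    convexHull ℝ
      {p : (Fin n → ℝ) × Matrix (Fin n) (Fin n) ℝ |
        ∃ x ∈ sparseF n ρ, p = (x, Matrix.vecMulVec x x)} ⊆ FR3proj n ρ :=
  stmt11_general ρ h2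

end
end

section
/- Let ρ ∈ {1,…,n} and let (x,u,X,U,R) ∈ ℝ^n × ℝ^n × S^n × S^n × ℝ^{n×n} be R3(ρ)-feasible. Then for every i ∈ {1,…,n}, (ρ − 2)u_i + 2R_{ii} + (1 − ρ)x_i − X_{ii} ≥ 0. -/
/-! Summing the nonnegative entries `X i j - R j i - R i j + U i j` over `j ≠ i` and evaluating
the row sums with the linear equalities of the relaxation gives exactly the claimed expression. -/

open Matrix BigOperators

noncomputable section

namespace R1Feasible

variable {n ρ : ℕ} {x u : Fin n → ℝ} {X U R : Matrix (Fin n) (Fin n) ℝ}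

theorem sum_row_eq (h : R1Feasible ρ x u X U R) (i : Fin n) :
    ∑ j, (X i j - R j i - R i j + U i j) = (1 - ρ) * x i + (ρ - 1) * u i := by
  obtain ⟨-, -, -, -, -, -, -, hXr, hRc, hRr, hUr, -⟩ := h
  simp only [Finset.sum_add_distrib, Finset.sum_sub_distrib, hXr, hRc, hRr, hUr]
  ring

theorem diag_le_sum_row (h : R1Feasible ρ x u X U R) (i : Fin n) :
    X i i - 2 * R i i + u i ≤ (1 - ρ) * x i + (ρ - 1) * u i := by
  have hsum := h.sum_row_eq i
  obtain ⟨-, -, -, -, -, -, hUd, -, -, -, -, hpos, -⟩ := h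
  have hdiag := Finset.single_le_sum (fun j _ => hpos i j) (Finset.mem_univ i)
  rw [hsum, hUd] at hdiag
  linarith

end R1Feasible

theorem stmt16_general {n : ℕ} (ρ : ℕ) (x u : Fin n → ℝ)
    (X U R : Matrix (Fin n) (Fin n) ℝ) (hfeas : R3Feasible ρ x u X U R) :
    ∀ i, 0 ≤ ((ρ : ℝ) - 2) * u i + 2 * R i i + (1 - (ρ : ℝ)) * x i - X i i := by
  intro i
  have := hfeas.1.diag_le_sum_row i
  linarith

theorem stmt16 {n : ℕ} (ρ : ℕ) (h1 : 1 ≤ ρ) (h2 : ρ ≤ n) (x u : Fin n → ℝ)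
    (X U R : Matrix (Fin n) (Fin n) ℝ) (hfeas : R3Feasible ρ x u X U R) :
    ∀ i, 0 ≤ ((ρ : ℝ) - 2) * u i + 2 * R i i + (1 - (ρ : ℝ)) * x i - X i i :=
  stmt16_general ρ x u X U R hfeas

end
end
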